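/- Let λ ∈ ℂ, h(z), b(z) ∈ ℂ((z)) with h′(z) ≠ 0, and set L := −(h/h′)∂ + b. Define ρ(L_0) = L and, for i ≥ −1 with i ≠ 0, ρ(L_i) = h^i (L + iλ) P(L − λ − i, i), where P is the Pochhammer symbol P(f,n) = f(f+1)···(f+n−1) for n > 0, P(f,0)=1, and P(f,−1) = 1/(f−1). Then [ρ(L_i), ρ(L_j)] = (i−j)ρ(L_{i+j}) for all i, j ≥ −1, so ρ is a representation of Witt_>. -/

import Mathlib

/-!
With `Q_{-1} = 1` and `Q_i = (X + iλ) P(X − λ − i, i)` for `i ≥ 0`, one has `ρ(L_i) = h^i Q_i(L)`.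
The Leibniz rule gives `L ∘ h^i = h^i ∘ (L − i)`, hence `Q(L) ∘ h^j = h^j ∘ Q(L − j)` for every
polynomial `Q`, and so `[ρ(L_i), ρ(L_j)] = h^{i+j} (Q_i(L − j) Q_j(L) − Q_j(L − i) Q_i(L))`.
The theorem is thereby reduced to the polynomial identity
`Q_i(X − j) Q_j − Q_j(X − i) Q_i = (i − j) Q_{i+j}`, a consequence of
`P(Y, m) P(Y + m, n) = P(Y, m + n)`.
-/

set_option synthInstance.maxHeartbeats 1000000
set_option maxHeartbeats 1000000

noncomputable section

/-- The derivative `∂ = d/dz` on `ℂ((z))`, as a `ℂ`-linear endomorphism. -/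
def Dz : Module.End ℂ (LaurentSeries ℂ) := LaurentSeries.derivative ℂ

/-- Multiplication by a Laurent series `g`, as a `ℂ`-linear endomorphism of `ℂ((z))`. -/
def mz (g : LaurentSeries ℂ) : Module.End ℂ (LaurentSeries ℂ) where
  toFun f := g * f
  map_add' := mul_add g
  map_smul' c f := by
    show g * (c • f) = c • (g * f)
    rw [← HahnSeries.single_zero_mul_eq_smul, ← HahnSeries.single_zero_mul_eq_smul, mul_left_comm]

/-- `P` is a differential operator on `ℂ((z))` of order `≤ k`: `P = Σ_{j=0}^{k} ξ_j ∂^j`. -/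
def DiffOrderLE (P : Module.End ℂ (LaurentSeries ℂ)) (k : ℕ) : Prop :=
  ∃ ξ : ℕ → LaurentSeries ℂ, P = ∑ j ∈ Finset.range (k + 1), mz (ξ j) * Dz ^ j

/-- `P` is a differential operator on `ℂ((z))` of order `< k` (for `k = 0` this means `P = 0`). -/
def DiffOrderLT (P : Module.End ℂ (LaurentSeries ℂ)) (k : ℕ) : Prop :=
  ∃ ξ : ℕ → LaurentSeries ℂ, P = ∑ j ∈ Finset.range k, mz (ξ j) * Dz ^ j

/-- `P` is a differential operator on `ℂ((z))` of order exactly `k`. -/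
def HasOrder (P : Module.End ℂ (LaurentSeries ℂ)) (k : ℕ) : Prop :=
  DiffOrderLE P k ∧ ¬ DiffOrderLT P k

/-- The Pochhammer product `P(A, n) = A (A+1) ⋯ (A+n−1)` in the ring of endomorphisms. -/
def pochEnd (A : Module.End ℂ (LaurentSeries ℂ)) (n : ℕ) : Module.End ℂ (LaurentSeries ℂ) :=
  ((List.range n).map fun k => A + (k : ℂ) • 1).prod

open Polynomial

lemma Dz_coeff (f : LaurentSeries ℂ) (n : ℤ) :
    (Dz f).coeff n = (n + 1 : ℂ) * f.coeff (n + 1) := by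
  rw [Dz, LaurentSeries.derivative_apply, LaurentSeries.hasseDeriv_coeff, Ring.choose_one_right,
    zsmul_eq_mul]
  push_cast
  ring

lemma coeff_single_one_mul_Dz (f : LaurentSeries ℂ) (n : ℤ) :
    (HahnSeries.single 1 1 * Dz f).coeff n = n * f.coeff n := by
  simpa [Dz_coeff] using
    HahnSeries.coeff_single_mul_add (r := (1 : ℂ)) (x := Dz f) (a := n - 1) (b := 1)

lemma support_single_one_mul_Dz_subset (f : LaurentSeries ℂ) :
    (HahnSeries.single 1 1 * Dz f).support ⊆ f.support := fun n hn hf =>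
  hn (by rw [coeff_single_one_mul_Dz, hf, mul_zero])

-- `z ∂` multiplies the `n`-th coefficient by `n`, so its Leibniz rule needs no reindexing.
lemma single_one_mul_Dz_mul (f g : LaurentSeries ℂ) :
    HahnSeries.single 1 1 * Dz (f * g) =
      HahnSeries.single 1 1 * Dz f * g + f * (HahnSeries.single 1 1 * Dz g) := by
  ext n
  rw [HahnSeries.coeff_add, coeff_single_one_mul_Dz, HahnSeries.coeff_mul,
    HahnSeries.coeff_mul_left' f.isPWO_support (support_single_one_mul_Dz_subset f),
    HahnSeries.coeff_mul_right' g.isPWO_support (support_single_one_mul_Dz_subset g),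
    Finset.mul_sum, ← Finset.sum_add_distrib]
  refine Finset.sum_congr rfl fun p hp => ?_
  have hn : (p.1 : ℂ) + p.2 = n := by exact_mod_cast (Finset.mem_antidiagonal.1 hp).2.2
  rw [coeff_single_one_mul_Dz, coeff_single_one_mul_Dz, ← hn]
  ring

lemma Dz_mul (f g : LaurentSeries ℂ) : Dz (f * g) = Dz f * g + f * Dz g := by
  refine mul_left_cancel₀ (HahnSeries.single_ne_zero (a := (1 : ℤ)) (one_ne_zero' ℂ)) ?_
  rw [single_one_mul_Dz_mul]
  ring

lemma ne_zero_of_Dz_ne_zero {h : LaurentSeries ℂ} (hder : Dz h ≠ 0) : h ≠ 0 := by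
  rintro rfl
  exact hder (map_zero Dz)

lemma Dz_one : Dz 1 = 0 := by
  simpa using Dz_mul 1 1

lemma Dz_inv {h : LaurentSeries ℂ} (hh : h ≠ 0) : Dz h⁻¹ = -(h⁻¹ ^ 2 * Dz h) := by
  have hD := Dz_mul h h⁻¹
  rw [mul_inv_cancel₀ hh, Dz_one] at hD
  linear_combination (-h⁻¹) * hD - Dz h⁻¹ * mul_inv_cancel₀ hh

lemma Dz_zpow {h : LaurentSeries ℂ} (hh : h ≠ 0) (i : ℤ) :
    Dz (h ^ i) = i * h ^ (i - 1) * Dz h := by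
  induction i using Int.induction_on with
  | zero => simp [Dz_one]
  | succ i ih =>
    rw [zpow_add_one₀ hh, Dz_mul, ih]
    simp only [zpow_sub_one₀ hh, add_sub_cancel_right]
    push_cast
    linear_combination (i : LaurentSeries ℂ) * h ^ (i : ℤ) * Dz h * mul_inv_cancel₀ hh
  | pred i ih =>
    rw [zpow_sub_one₀ hh, Dz_mul, ih, Dz_inv hh]
    simp only [zpow_sub_one₀ hh]
    push_cast
    ring

lemma mz_apply (g f : LaurentSeries ℂ) : mz g f = g * f := rfl

lemma mz_mul (f g : LaurentSeries ℂ) : mz (f * g) = mz f * mz g :=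
  LinearMap.ext fun u => mul_assoc f g u

lemma mz_commute (f g : LaurentSeries ℂ) : Commute (mz f) (mz g) := by
  rw [Commute, SemiconjBy, ← mz_mul, ← mz_mul, mul_comm]

lemma mul_mz_zpow {h : LaurentSeries ℂ} (hder : Dz h ≠ 0) (b : LaurentSeries ℂ) (i : ℤ) :
    (mz (-(h / Dz h)) * Dz + mz b) * mz (h ^ i) =
      mz (h ^ i) * (mz (-(h / Dz h)) * Dz + mz b - algebraMap ℂ _ (i : ℂ)) := by
  have hh := ne_zero_of_Dz_ne_zero hder
  ext1 f
  simp only [Module.End.mul_apply, LinearMap.add_apply, LinearMap.sub_apply, map_intCast,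
    Module.End.intCast_apply, zsmul_eq_mul, mz_apply, Dz_mul, Dz_zpow hh, zpow_sub_one₀ hh]
  field_simp
  ring

section ShiftedCommutation

variable {R A : Type*} [CommRing R] [Ring A] [Algebra R A]

lemma aeval_mul_of_mul_eq_mul_sub {L a : A} {c : R} (hLa : L * a = a * (L - algebraMap R A c))
    (p : R[X]) : aeval L p * a = a * aeval L (p.comp (X - C c)) := by
  rw [aeval_comp, map_sub, aeval_X, aeval_C]
  induction p using Polynomial.induction_on with
  | C r => simp only [aeval_C, Algebra.commutes]
  | add p q hp hq => simp only [map_add, add_mul, mul_add, hp, hq]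
  | monomial n r ih =>
    have hX (M : A) : aeval M (C r * X ^ (n + 1)) = aeval M (C r * X ^ n) * M := by
      rw [pow_succ, ← mul_assoc, map_mul, aeval_X]
    rw [hX, hX, mul_assoc, hLa, ← mul_assoc, ih, mul_assoc]

lemma lie_mul_aeval_mul_aeval {L a b : A} {c d : R} (hab : Commute a b)
    (ha : L * a = a * (L - algebraMap R A c)) (hb : L * b = b * (L - algebraMap R A d))
    (p q : R[X]) :
    ⁅a * aeval L p, b * aeval L q⁆ =
      a * b * aeval L (p.comp (X - C d) * q - q.comp (X - C c) * p) := by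
  rw [Ring.lie_def, map_sub, map_mul, map_mul, mul_sub]
  simp only [mul_assoc, ← mul_assoc (aeval L _), aeval_mul_of_mul_eq_mul_sub ha,
    aeval_mul_of_mul_eq_mul_sub hb]
  rw [← mul_assoc b a, ← hab.eq, mul_assoc]

end ShiftedCommutation

lemma pochEnd_succ (A : Module.End ℂ (LaurentSeries ℂ)) (n : ℕ) :
    pochEnd A (n + 1) = pochEnd A n * (A + (n : ℂ) • 1) := by
  simp [pochEnd, List.range_succ]

lemma pochEnd_eq_aeval (A : Module.End ℂ (LaurentSeries ℂ)) (n : ℕ) :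
    pochEnd A n = aeval A (ascPochhammer ℂ n) := by
  induction n with
  | zero => simp [pochEnd]
  | succ n ih =>
    rw [pochEnd_succ, ih, ascPochhammer_succ_right, map_mul, map_add, aeval_X, map_natCast,
      Nat.cast_smul_eq_nsmul, nsmul_eq_mul, mul_one]

/-- `ρ i = h ^ i * (wittPoly lam i)(L)` for `i ≥ -1`. The branch `negSucc` is meaningful only at
`-1`, where the factor `L - λ` of `ρ(L₋₁)` cancels against `P(L - λ + 1, -1) = (L - λ)⁻¹`. -/
def wittPoly (lam : ℂ) : ℤ → ℂ[X]
  | .ofNat n => (X + C (n * lam)) * (ascPochhammer ℂ n).comp (X - C (lam + n))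
  | .negSucc _ => 1

lemma wittPoly_natCast (lam : ℂ) (n : ℕ) :
    wittPoly lam n = (X + C (n * lam)) * (ascPochhammer ℂ n).comp (X - C (lam + n)) := rfl

lemma wittPoly_neg_one (lam : ℂ) : wittPoly lam (-1) = 1 := rfl

lemma aeval_wittPoly_natCast (L : Module.End ℂ (LaurentSeries ℂ)) (lam : ℂ) (n : ℕ) :
    aeval L (wittPoly lam n) = (L + ((n : ℂ) * lam) • 1) * pochEnd (L - (lam + n) • 1) n := by
  rw [wittPoly_natCast, map_mul, map_add, aeval_X, aeval_C, aeval_comp, map_sub, aeval_X, aeval_C,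
    pochEnd_eq_aeval, Algebra.algebraMap_eq_smul_one, Algebra.algebraMap_eq_smul_one]

lemma ascPochhammer_eval_mul_eval_add {S : Type*} [CommSemiring S] (m n : ℕ) (y : S) :
    (ascPochhammer S m).eval y * (ascPochhammer S n).eval (y + m) =
      (ascPochhammer S (m + n)).eval y := by
  rw [← ascPochhammer_mul, eval_mul, eval_comp, eval_add, eval_X, eval_natCast]

lemma wittPoly_bracket_natCast (lam : ℂ) (m n : ℕ) :
    (wittPoly lam m).comp (X - C (n : ℂ)) * wittPoly lam n -
        (wittPoly lam n).comp (X - C (m : ℂ)) * wittPoly lam m =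
      ((m : ℂ) - n) • wittPoly lam (m + n : ℕ) := by
  simp only [wittPoly_natCast]
  refine Polynomial.funext fun x => ?_
  simp only [eval_sub, eval_mul, eval_comp, eval_smul, eval_add, eval_X, eval_C,
    smul_eq_mul, Nat.cast_add]
  rw [show x - n - (lam + m) = x - (lam + (m + n)) by ring,
    show x - m - (lam + n) = x - (lam + (m + n)) by ring]
  have hm := ascPochhammer_eval_mul_eval_add m n (x - (lam + (m + n)))
  have hn := ascPochhammer_eval_mul_eval_add n m (x - (lam + (m + n)))
  rw [show x - (lam + (m + n)) + m = x - (lam + n) by ring] at hm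
  rw [show x - (lam + (m + n)) + n = x - (lam + m) by ring, add_comm n m] at hn
  linear_combination (x - n + m * lam) * (x + n * lam) * hm - (x - m + n * lam) * (x + m * lam) * hn

lemma wittPoly_comp_X_add_one_sub (lam : ℂ) (m : ℕ) :
    (wittPoly lam m).comp (X + 1) - wittPoly lam m = ((m : ℂ) + 1) • wittPoly lam (m - 1) := by
  cases m with
  | zero =>
    rw [wittPoly_natCast, Nat.cast_zero (R := ℤ), zero_sub, wittPoly_neg_one]
    simp
  | succ s =>
    rw [wittPoly_natCast, Nat.cast_succ (R := ℤ), add_sub_cancel_right, wittPoly_natCast]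
    refine Polynomial.funext fun x => ?_
    simp only [eval_sub, eval_mul, eval_comp, eval_smul, eval_add, eval_X, eval_C, eval_one,
      smul_eq_mul, Nat.cast_add, Nat.cast_one]
    have hright := ascPochhammer_succ_eval s (x - (lam + s))
    have hleft := ascPochhammer_eval_mul_eval_add 1 s (x - (lam + s) - 1)
    rw [ascPochhammer_one, eval_X, Nat.cast_one, sub_add_cancel, add_comm 1 s] at hleft
    rw [show x + 1 - (lam + (s + 1)) = x - (lam + s) by ring,
      show x - (lam + (s + 1)) = x - (lam + s) - 1 by ring, hright, ← hleft]
    ring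

lemma exists_natCast_or_eq_neg_one {k : ℤ} (hk : -1 ≤ k) : (∃ m : ℕ, k = m) ∨ k = -1 :=
  (eq_or_lt_of_le hk).elim (fun h => .inr h.symm) fun _ => .inl (Int.eq_ofNat_of_zero_le (by omega))

lemma wittPoly_bracket (lam : ℂ) {i j : ℤ} (hi : -1 ≤ i) (hj : -1 ≤ j) :
    (wittPoly lam i).comp (X - C (j : ℂ)) * wittPoly lam j -
        (wittPoly lam j).comp (X - C (i : ℂ)) * wittPoly lam i =
      ((i : ℂ) - j) • wittPoly lam (i + j) := by
  have h_neg_one (m : ℕ) : (wittPoly lam m).comp (X - C ((-1 : ℤ) : ℂ)) * wittPoly lam (-1) -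
      (wittPoly lam (-1)).comp (X - C ((m : ℤ) : ℂ)) * wittPoly lam m =
      (((m : ℤ) : ℂ) - (-1 : ℤ)) • wittPoly lam (m + -1) := by
    simpa [wittPoly_neg_one, ← sub_eq_add_neg] using wittPoly_comp_X_add_one_sub lam m
  rcases exists_natCast_or_eq_neg_one hi with ⟨m, rfl⟩ | rfl <;>
    rcases exists_natCast_or_eq_neg_one hj with ⟨n, rfl⟩ | rfl
  · simpa only [Int.cast_natCast, Nat.cast_add] using wittPoly_bracket_natCast lam m n
  · exact h_neg_one m
  · rw [← neg_sub, h_neg_one, add_comm, ← neg_smul, neg_sub]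
  · simp

/-- Let `λ ∈ ℂ`, `h, b ∈ ℂ((z))` with `h′ ≠ 0` and set `L := −(h/h′)∂ + b`.  Define
`ρ(L i) = h^i (L + iλ) P(L − λ − i, i)` for `i ≥ 0` and
`ρ(L₋₁) = h⁻¹` (this is the value of `h^{−1}(L − λ)·P(L − λ + 1, −1)` with
`P(f, −1) = 1/(f−1)`, by formal cancellation).  Then
`[ρ(L i), ρ(L j)] = (i−j) ρ(L (i+j))` for all `i, j ≥ −1`, so `ρ` is a
representation of `Witt_>`. -/
theorem witt_gt_representation_S0
    (lam : ℂ) (h b : LaurentSeries ℂ) (hder : Dz h ≠ 0)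
    (L : Module.End ℂ (LaurentSeries ℂ))
    (hL : L = mz (-(h / Dz h)) * Dz + mz b)
    (ρ : ℤ → Module.End ℂ (LaurentSeries ℂ))
    (hρ : ∀ i : ℤ, 0 ≤ i →
      ρ i = mz (h ^ i) * (L + ((i : ℂ) * lam) • 1) * pochEnd (L - (lam + (i : ℂ)) • 1) i.toNat)
    (hρm1 : ρ (-1) = mz h⁻¹) :
    ∀ i j : ℤ, -1 ≤ i → -1 ≤ j →
      ⁅ρ i, ρ j⁆ = (((i : ℂ) - (j : ℂ))) • ρ (i + j) := by
  have hshift (i : ℤ) : L * mz (h ^ i) = mz (h ^ i) * (L - algebraMap ℂ _ (i : ℂ)) :=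
    hL ▸ mul_mz_zpow hder b i
  have hρ_wittPoly (i : ℤ) (hi : -1 ≤ i) : ρ i = mz (h ^ i) * aeval L (wittPoly lam i) := by
    obtain ⟨n, rfl⟩ | rfl := exists_natCast_or_eq_neg_one hi
    · rw [hρ n n.cast_nonneg, Int.cast_natCast, Int.toNat_natCast, mul_assoc,
        aeval_wittPoly_natCast]
    · rw [hρm1, wittPoly_neg_one, map_one, mul_one, zpow_neg_one]
  intro i j hi hj
  rcases eq_or_ne i j with rfl | hij
  · rw [Ring.lie_def, sub_self, sub_self, zero_smul]
  rw [hρ_wittPoly i hi, hρ_wittPoly j hj, hρ_wittPoly (i + j) (by omega),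
    lie_mul_aeval_mul_aeval (A := Module.End ℂ (LaurentSeries ℂ)) (mz_commute _ _) (hshift i)
      (hshift j),
    wittPoly_bracket lam hi hj, ← mz_mul, ← zpow_add₀ (ne_zero_of_Dz_ne_zero hder), map_smul,
    mul_smul_comm]
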